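/- Let p be a real number with 0 ≤ p ≤ 1/2. Define probability distributions μ_k on {0,1} × {0,1} for k ≥ 1 as follows: μ₁(0,0) = μ₁(1,1) = p and μ₁(0,1) = μ₁(1,0) = 1/2 − p; and μ_{k+1}(u) = ∑_{v ∈ {0,1}²} μ_k(v) · T(v, u ⊕ v), where u ⊕ v is coordinatewise XOR and the transition weights are T((1,1),(0,0)) = T((1,1),(1,1)) = p, T((1,1),(0,1)) = T((1,1),(1,0)) = 1/2 − p, and for v ≠ (1,1): T(v,(0,0)) = T(v,(1,1)) = 1/2 and T(v,(0,1)) = T(v,(1,0)) = 0. Then for every k ≥ 1: μ_k(0,1) + μ_k(1,0) = 1 − 2p(p + 1/2)^{k−1}, and consequently 3 + (μ_k(0,1) + μ_k(1,0)) − (μ_k(0,0) + μ_k(1,1)) = 4(1 − p(p + 1/2)^{k−1}). -/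
import Mathlib


/-- Transition weights of the depth-`k` adaptive parity protocol on correlated
nonlocal boxes: `nlbT p v w` is the probability that, with current parity pair
`v`, the next box changes the parity pair by `w`. -/
noncomputable def nlbT (p : ℝ) (v w : Bool × Bool) : ℝ :=
  if v = (true, true) then
    (if w = (false, false) ∨ w = (true, true) then p else 1 / 2 - p)
  else
    (if w = (false, false) ∨ w = (true, true) then 1 / 2 else 0)

/-- `nlbMu p (k-1)` is the distribution `μ_k` of the pair of output parities
after `k` boxes on input pair `(1,1)`; `nlbMu p 0 = μ₁`. -/
noncomputable def nlbMu (p : ℝ) : ℕ → Bool × Bool → ℝ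
  | 0, u => if u.1 = u.2 then p else 1 / 2 - p
  | k + 1, u => ∑ v : Bool × Bool, nlbMu p k v * nlbT p v (xor u.1 v.1, xor u.2 v.2)

lemma nlb_key (p : ℝ) : ∀ n : ℕ,
    nlbMu p n (false, false) = p * (p + 1 / 2) ^ n
    ∧ nlbMu p n (true, true) = p * (p + 1 / 2) ^ n
    ∧ nlbMu p n (false, true) + nlbMu p n (true, false)
        = 1 - 2 * p * (p + 1 / 2) ^ n := by
  intro n
  induction n with
  | zero => refine ⟨by simp [nlbMu], by simp [nlbMu], ?_⟩; simp [nlbMu]; ring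
  | succ n ih =>
    obtain ⟨h1, h2, h3⟩ := ih
    refine ⟨?_, ?_, ?_⟩ <;>
        simp only [nlbMu, nlbT, Fintype.sum_prod_type, Fintype.sum_bool] <;>
        norm_num
    · linear_combination p * h2 + (1 / 2) * h1
    · linear_combination p * h2 + (1 / 2) * h1
    · linear_combination (1 - 2 * p) * h2 + h3

/-- Theorem 2: the depth-`k` adaptive parity protocol on correlated nonlocal
boxes yields odd output parity with probability `1 - 2p(p + 1/2)^{k-1}`, and
hence attains CHSH value `4(1 - p(p + 1/2)^{k-1})`. -/
theorem adaptive_parity_value (p : ℝ) (hp0 : 0 ≤ p) (hp : p ≤ 1 / 2) :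
    ∀ k : ℕ, 1 ≤ k →
      nlbMu p (k - 1) (false, true) + nlbMu p (k - 1) (true, false)
          = 1 - 2 * p * (p + 1 / 2) ^ (k - 1)
      ∧ 3 + ((nlbMu p (k - 1) (false, true) + nlbMu p (k - 1) (true, false))
              - (nlbMu p (k - 1) (false, false) + nlbMu p (k - 1) (true, true)))
          = 4 * (1 - p * (p + 1 / 2) ^ (k - 1)) := by
  intro k hk
  obtain ⟨h1, h2, h3⟩ := nlb_key p (k - 1)
  refine ⟨h3, ?_⟩
  rw [h1, h2, h3]; ring
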